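/- arXiv:1607.04604 — 2 statements merged into one kernel-verified Lean document; each statement's English description precedes it below -/
import Mathlib

section
/- Let B : N -> N satisfy B(1) = 0 and B(n) = floor(n/2) + B(floor(n/2)) + B(ceil(n/2)) for n >= 2, and define Ftilde(x) = sum over i from 0 to infinity of (1/2^i)*Zigzag(2^i * x). Then for every positive natural number n and every natural number k with n <= 2^k, B(n) = n*k/2 - 2^(k-1) * Ftilde(n/2^k), as an equality of rationals/reals. -/
noncomputable def Zigzag (x : ℝ) : ℝ := min (x - ⌊x⌋) (⌈x⌉ - x)

noncomputable def Ftilde (x : ℝ) : ℝ := ∑' i : ℕ, (1 / 2 ^ i) * Zigzag (2 ^ i * x)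

/-!
For natural `n` only the first `k` terms of the series `2 ^ k * Ftilde (n / 2 ^ k)` are nonzero,
and they are the distances from `n` to the nearest multiples of `2, 4, …, 2 ^ k`. Splitting
`n = 2m` or `n = 2m + 1`, this finite sum `S n k` satisfies `S (2m) (k+1) = 2 S m k` and
`S (2m+1) (k+1) = 1 + S m k + S (m+1) k`, which matches the MergeSort recurrence so that
`2 B n + S n k = n k` follows by induction on `k`.
-/

open Finset

def distToMultiple (P n : ℕ) : ℕ := min (n % P) (P - n % P)

lemma distToMultiple_zero_right (P : ℕ) : distToMultiple P 0 = 0 := by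
  simp [distToMultiple]

lemma distToMultiple_two_mul (P m : ℕ) :
    distToMultiple (2 * P) (2 * m) = 2 * distToMultiple P m := by
  unfold distToMultiple
  rw [Nat.mul_mod_mul_left]
  omega

lemma distToMultiple_two_mul_add_one {P : ℕ} (hP : Even P) (m : ℕ) :
    distToMultiple (2 * P) (2 * m + 1) = distToMultiple P m + distToMultiple P (m + 1) := by
  obtain ⟨t, rfl⟩ := hP
  rcases Nat.eq_zero_or_pos t with rfl | ht
  · simp [distToMultiple]
  have hodd : (2 * m + 1) % (2 * (t + t)) = 2 * (m % (t + t)) + 1 := by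
    rw [Nat.mod_mul, show (2 * m + 1) / 2 = m by omega]
    omega
  have hlt : m % (t + t) < t + t := Nat.mod_lt m (by omega)
  have hone : 1 % (t + t) = 1 := Nat.mod_eq_of_lt (by omega)
  unfold distToMultiple
  rw [hodd, Nat.add_mod_eq_ite, hone]
  split_ifs <;> omega

def dyadicDistSum (n k : ℕ) : ℕ := ∑ j ∈ range k, distToMultiple (2 ^ (j + 1)) n

lemma dyadicDistSum_zero_left (k : ℕ) : dyadicDistSum 0 k = 0 := by
  simp [dyadicDistSum, distToMultiple_zero_right]

lemma dyadicDistSum_two_mul (m k : ℕ) :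
    dyadicDistSum (2 * m) (k + 1) = 2 * dyadicDistSum m k := by
  simp only [dyadicDistSum, sum_range_succ', pow_succ' _ (_ + 1), distToMultiple_two_mul, mul_sum]
  simp [distToMultiple]

lemma dyadicDistSum_two_mul_add_one (m k : ℕ) :
    dyadicDistSum (2 * m + 1) (k + 1) = 1 + dyadicDistSum m k + dyadicDistSum (m + 1) k := by
  have hsplit : ∀ j ∈ range k, distToMultiple (2 ^ (j + 1 + 1)) (2 * m + 1) =
      distToMultiple (2 ^ (j + 1)) m + distToMultiple (2 ^ (j + 1)) (m + 1) := fun j _ => by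
    rw [pow_succ' _ (j + 1)]
    exact distToMultiple_two_mul_add_one (Nat.even_pow.mpr ⟨even_two, j.succ_ne_zero⟩) m
  have hlow : distToMultiple (2 ^ (0 + 1)) (2 * m + 1) = 1 := by
    simp only [distToMultiple, zero_add, pow_one]
    omega
  simp only [dyadicDistSum]
  rw [sum_range_succ', sum_congr rfl hsplit, sum_add_distrib, hlow]
  ring

lemma dyadicDistSum_one (k : ℕ) : dyadicDistSum 1 k = k := by
  induction k with
  | zero => simp [dyadicDistSum]
  | succ k ih =>
    simpa [dyadicDistSum_zero_left, ih, add_comm] using dyadicDistSum_two_mul_add_one 0 k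

theorem two_mul_add_dyadicDistSum {B : ℕ → ℕ} (hB1 : B 1 = 0)
    (hB : ∀ n, 2 ≤ n → B n = n / 2 + B (n / 2) + B ((n + 1) / 2)) (k : ℕ) :
    ∀ n, 0 < n → n ≤ 2 ^ k → 2 * B n + dyadicDistSum n k = n * k := by
  induction k with
  | zero =>
    intro n hn hnk
    obtain rfl : n = 1 := by rw [pow_zero] at hnk; omega
    simp [hB1, dyadicDistSum]
  | succ k ih =>
    intro n hn hnk
    rw [pow_succ] at hnk
    obtain rfl | hn2 := (Nat.succ_le_of_lt hn).eq_or_lt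
    · simp [hB1, dyadicDistSum_one]
    obtain ⟨m, rfl | rfl⟩ := Nat.even_or_odd' n
    · have hrec := hB (2 * m) (by omega)
      rw [show 2 * m / 2 = m by omega, show (2 * m + 1) / 2 = m by omega] at hrec
      have ihm := ih m (by omega) (by omega)
      rw [dyadicDistSum_two_mul, hrec]
      linear_combination 2 * ihm
    · have hrec := hB (2 * m + 1) (by omega)
      rw [show (2 * m + 1) / 2 = m by omega, show (2 * m + 1 + 1) / 2 = m + 1 by omega] at hrec
      have ihm := ih m (by omega) (by omega)
      have ihm1 := ih (m + 1) (by omega) (by omega)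
      rw [dyadicDistSum_two_mul_add_one, hrec]
      linear_combination ihm + ihm1

lemma Zigzag_intCast (m : ℤ) : Zigzag m = 0 := by
  simp [Zigzag]

lemma Zigzag_eq_min_fract (x : ℝ) : Zigzag x = min (Int.fract x) (1 - Int.fract x) := by
  rcases Int.fract_eq_zero_or_add_one_sub_ceil x with h | h
  · obtain ⟨m, rfl⟩ := Int.fract_eq_zero_iff.mp h
    simp [Zigzag_intCast, h]
  · rw [Zigzag, ← Int.fract, h]
    ring_nf

lemma natCast_mul_Zigzag_div {P : ℕ} (hP : 0 < P) (n : ℕ) :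
    (P : ℝ) * Zigzag (n / P) = distToMultiple P n := by
  have hP' : (P : ℝ) ≠ 0 := by positivity
  rw [Zigzag_eq_min_fract, Int.fract_div_natCast_eq_div_natCast_mod,
    mul_min_of_nonneg _ _ (Nat.cast_nonneg P), distToMultiple, Nat.cast_min,
    Nat.cast_sub (Nat.mod_lt n hP).le]
  field_simp

lemma two_pow_mul_Ftilde_div_two_pow (n k : ℕ) :
    (2 : ℝ) ^ k * Ftilde (n / 2 ^ k) = dyadicDistSum n k := by
  have htail : ∀ i ∉ range k, (1 / 2 ^ i) * Zigzag (2 ^ i * ((n : ℝ) / 2 ^ k)) = 0 := by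
    intro i hi
    have hint : (2 : ℝ) ^ i * (n / 2 ^ k) = ((2 ^ (i - k) * n : ℕ) : ℤ) := by
      rw [show (2 : ℝ) ^ i = 2 ^ (i - k) * 2 ^ k by
        rw [← pow_add, Nat.sub_add_cancel (not_lt.mp (mem_range.not.mp hi))]]
      push_cast
      field_simp
    rw [hint, Zigzag_intCast, mul_zero]
  rw [Ftilde, tsum_eq_sum htail, mul_sum, dyadicDistSum, Nat.cast_sum, ← sum_range_reflect]
  refine sum_congr rfl fun i hi => ?_
  have hik := mem_range.mp hi
  have hpow : (2 : ℝ) ^ k = 2 ^ (k - 1 - i) * 2 ^ (i + 1) := by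
    rw [← pow_add, show k - 1 - i + (i + 1) = k by omega]
  rw [← natCast_mul_Zigzag_div (by positivity) n, hpow]
  push_cast
  field_simp

lemma ceil_natCast_div_two_toNat (n : ℕ) : (⌈(n : ℚ) / 2⌉).toNat = (n + 1) / 2 := by
  rw [show (2 : ℚ) = (2 : ℕ) by norm_num, Rat.ceil_natCast_div_natCast]
  omega

theorem B_eq_Ftilde (B : ℕ → ℕ) (hB1 : B 1 = 0)
    (hB : ∀ n, 2 ≤ n → B n = n / 2 + B (n / 2) + B ((⌈(n : ℚ) / 2⌉).toNat)) :
    ∀ n k : ℕ, 0 < n → n ≤ 2 ^ k →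
      (B n : ℝ) = (n : ℝ) * k / 2 - (2 : ℝ) ^ ((k : ℤ) - 1) * Ftilde ((n : ℝ) / 2 ^ k) := by
  intro n k hn hk
  have hB' : ∀ n, 2 ≤ n → B n = n / 2 + B (n / 2) + B ((n + 1) / 2) := fun n hn => by
    rw [hB n hn, ceil_natCast_div_two_toNat]
  have hcount : (2 * B n + dyadicDistSum n k : ℝ) = n * k := by
    exact_mod_cast two_mul_add_dyadicDistSum hB1 hB' k n hn hk
  rw [zpow_sub₀ two_ne_zero, zpow_natCast, zpow_one, div_mul_eq_mul_div,
    two_pow_mul_Ftilde_div_two_pow]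
  linarith
end

section
/- Define Ftilde(x) = sum over i from 0 to infinity of (1/2^i)*Zigzag(2^i * x). Then for every natural number k >= 2, Ftilde(3/2^k) = (3k - 4)/2^k. -/
lemma zigzag_nonneg (x : ℝ) : 0 ≤ Zigzag x :=
  le_min (by linarith [Int.floor_le x]) (by linarith [Int.le_ceil x])

lemma zigzag_le_half (x : ℝ) : Zigzag x ≤ 1 / 2 := by
  have h : ((⌈x⌉ : ℝ)) ≤ (⌊x⌋ : ℝ) + 1 := by exact_mod_cast Int.ceil_le_floor_add_one x
  rcases le_total (x - ⌊x⌋) ((⌈x⌉ : ℝ) - x) with hle | hle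
  · rw [Zigzag, min_eq_left hle]; linarith
  · rw [Zigzag, min_eq_right hle]; linarith

lemma zigzag_nat (n : ℕ) : Zigzag n = 0 := by
  simp [Zigzag]

lemma zigzag_of_le_half (x : ℝ) (h0 : 0 ≤ x) (h : x ≤ 1 / 2) : Zigzag x = x := by
  rcases eq_or_lt_of_le h0 with rfl | hpos
  · simpa using zigzag_nat 0
  · have hf : ⌊x⌋ = 0 := Int.floor_eq_zero_iff.mpr ⟨h0, by linarith⟩
    have hc : (1 : ℤ) ≤ ⌈x⌉ := Int.one_le_ceil_iff.mpr hpos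
    have hc' : (1 : ℝ) ≤ (⌈x⌉ : ℝ) := by exact_mod_cast hc
    rw [Zigzag, hf]
    push_cast
    rw [min_eq_left (by linarith)]
    ring

lemma ftilde_summable (x : ℝ) :
    Summable (fun i : ℕ => (1 / 2 ^ i) * Zigzag (2 ^ i * x)) := by
  have hg : Summable (fun i : ℕ => (1 / 2 : ℝ) * (1 / 2) ^ i) :=
    (summable_geometric_of_lt_one (by norm_num) (by norm_num)).mul_left _
  refine Summable.of_nonneg_of_le
    (fun i => mul_nonneg (by positivity) (zigzag_nonneg _)) (fun i => ?_) hg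
  have h1 := zigzag_le_half (2 ^ i * x)
  have h2 : (0:ℝ) < 1 / 2 ^ i := by positivity
  calc (1 / 2 ^ i) * Zigzag (2 ^ i * x) ≤ (1 / 2 ^ i) * (1/2) :=
        mul_le_mul_of_nonneg_left h1 (le_of_lt h2)
    _ = (1/2) * (1/2)^i := by rw [div_pow, one_pow]; ring

lemma Ftilde_rec (x : ℝ) : Ftilde x = Zigzag x + (1 / 2) * Ftilde (2 * x) := by
  rw [Ftilde, Summable.tsum_eq_zero_add (ftilde_summable x)]
  congr 1
  · norm_num
  · rw [Ftilde, ← tsum_mul_left]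
    congr 1
    funext n
    have harg : (2:ℝ) ^ (n + 1) * x = 2 ^ n * (2 * x) := by ring
    rw [harg, pow_succ]
    ring

lemma Ftilde_three : Ftilde 3 = 0 := by
  rw [Ftilde]
  convert tsum_zero with i
  have : (2:ℝ) ^ i * 3 = ((2 ^ i * 3 : ℕ) : ℝ) := by push_cast; ring
  rw [this, zigzag_nat, mul_zero]

theorem Ftilde_three_val (k : ℕ) (hk : 2 ≤ k) :
    Ftilde (3 / 2 ^ k) = (3 * (k : ℝ) - 4) / 2 ^ k := by
  induction k, hk using Nat.le_induction with
  | base =>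
    have h1 : Ftilde (3 / 2 ^ 2) = Zigzag (3 / 2 ^ 2) + (1/2) * Ftilde (2 * (3 / 2 ^ 2)) :=
      Ftilde_rec _
    have h2 : (2:ℝ) * (3 / 2 ^ 2) = 3 / 2 := by norm_num
    have h3 : Ftilde (3 / 2) = Zigzag (3 / 2) + (1/2) * Ftilde (2 * (3 / 2)) := Ftilde_rec _
    have h4 : (2:ℝ) * (3/2) = 3 := by norm_num
    have hz1 : Zigzag (3/2) = 1/2 := by
      have hf : ⌊(3/2:ℝ)⌋ = 1 := by rw [Int.floor_eq_iff]; norm_num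
      have hc : ⌈(3/2:ℝ)⌉ = 2 := by rw [Int.ceil_eq_iff]; norm_num
      rw [Zigzag, hf, hc]; norm_num
    have hz2 : Zigzag (3 / 2^2) = 1/4 := by
      have hf : ⌊(3/2^2:ℝ)⌋ = 0 := by rw [Int.floor_eq_iff]; norm_num
      have hc : ⌈(3/2^2:ℝ)⌉ = 1 := by rw [Int.ceil_eq_iff]; norm_num
      rw [Zigzag, hf, hc]; norm_num
    rw [h1, h2, h3, h4, Ftilde_three, hz1, hz2]
    norm_num
  | succ n hn ih =>
    have h1 : Ftilde (3 / 2 ^ (n+1)) = Zigzag (3 / 2 ^ (n+1)) + (1/2) * Ftilde (2 * (3 / 2 ^ (n+1))) :=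
      Ftilde_rec _
    have h2 : (2:ℝ) * (3 / 2 ^ (n+1)) = 3 / 2 ^ n := by
      rw [pow_succ]; field_simp
    have hz : Zigzag (3 / 2 ^ (n+1)) = 3 / 2 ^ (n+1) := by
      apply zigzag_of_le_half
      · positivity
      · rw [div_le_div_iff₀ (by positivity) (by norm_num)]
        have : (2:ℝ)^3 ≤ 2 ^ (n+1) := pow_le_pow_right₀ (by norm_num) (by omega)
        norm_num at this ⊢
        linarith
    rw [h1, h2, hz, ih]
    have hp : (2:ℝ)^n ≠ 0 := by positivity
    rw [pow_succ]
    field_simp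
    push_cast
    ring
end
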